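/- arXiv:2110.06591 — 6 statements merged into one kernel-verified Lean document; each statement's English description precedes it below -/
import Mathlib

section
/- Let X be a standard Borel space, let p, q, r be probability measures on X, let s be a coupling of p and q, and let t be a coupling of q and r. Then the conditional kernel of the composite coupling t∘s is given, for p-almost every x, by the Chapman–Kolmogorov composition: (t∘s)⃗(·|x) equals the bind of s⃗(·|x) along the kernel t⃗, i.e. for p-almost all x and all measurable C ⊆ X, (t∘s)⃗(C|x) = ∫_X t⃗(C|y) s⃗(dy|x). -/
/-!
On a measurable `E ⊆ X × X`, both `t ∘ s` and `p ⊗ (t⃗ ∘ s⃗)` give `∫ t⃗(E_x | y) ds(x, y)`: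
the composite integrates over `q ⊗ s⃖`, which is `s` with its coordinates swapped, and the
other over `p ⊗ s⃗ = s`. So `p ⊗ (t⃗ ∘ s⃗)` disintegrates `t ∘ s`, and uniqueness of the
disintegration identifies `(t ∘ s)⃗` with `t⃗ ∘ s⃗` almost everywhere.
-/

open MeasureTheory ProbabilityTheory

variable {X : Type*} [MeasurableSpace X] [StandardBorelSpace X] [Nonempty X]

noncomputable def coupComp (t s : Measure (X × X)) [IsFiniteMeasure s] [IsFiniteMeasure t] :
    Measure (X × X) :=
  (s.snd.compProd ((s.map Prod.swap).condKernel ×ₖ t.condKernel)).map Prod.snd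

instance coupComp.instIsFiniteMeasure (t s : Measure (X × X))
    [IsFiniteMeasure s] [IsFiniteMeasure t] : IsFiniteMeasure (coupComp t s) := by
  unfold coupComp; infer_instance

section

variable {α β γ : Type*} [MeasurableSpace α] [MeasurableSpace β] [MeasurableSpace γ]

lemma ProbabilityTheory.Kernel.measurable_kernel_snd_prodMk_fst (κ : Kernel β γ)
    [IsSFiniteKernel κ] {E : Set (α × γ)} (hE : MeasurableSet E) :
    Measurable fun z : α × β => κ z.2 (Prod.mk z.1 ⁻¹' E) :=
  Kernel.measurable_kernel_prodMk_left (κ := Kernel.prodMkLeft α κ)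
    (t := {w : (α × β) × γ | (w.1.1, w.2) ∈ E}) (hE.preimage (by fun_prop))

namespace MeasureTheory.Measure

lemma compProd_comp_apply (μ : Measure α) [SFinite μ] (η : Kernel α β) [IsSFiniteKernel η]
    (κ : Kernel β γ) [IsSFiniteKernel κ] {E : Set (α × γ)} (hE : MeasurableSet E) :
    (μ ⊗ₘ (κ ∘ₖ η)) E = ∫⁻ z, κ z.2 (Prod.mk z.1 ⁻¹' E) ∂(μ ⊗ₘ η) := by
  rw [compProd_apply hE, lintegral_compProd (Kernel.measurable_kernel_snd_prodMk_fst κ hE)]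
  simp_rw [Kernel.comp_apply' _ _ _ (measurable_prodMk_left hE)]

lemma map_snd_compProd_prod_apply (μ : Measure β) [SFinite μ] (η : Kernel β α)
    [IsSFiniteKernel η] (κ : Kernel β γ) [IsSFiniteKernel κ]
    {E : Set (α × γ)} (hE : MeasurableSet E) :
    ((μ ⊗ₘ (η ×ₖ κ)).map Prod.snd) E = ∫⁻ z, κ z.1 (Prod.mk z.2 ⁻¹' E) ∂(μ ⊗ₘ η) := by
  have hκE : Measurable fun z : β × α => κ z.1 (Prod.mk z.2 ⁻¹' E) :=
    (Kernel.measurable_kernel_snd_prodMk_fst κ hE).comp measurable_swap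
  rw [map_apply measurable_snd hE, compProd_apply (measurable_snd hE), lintegral_compProd hκE]
  exact lintegral_congr fun b => Kernel.prod_apply' _ _ _ hE

end MeasureTheory.Measure

end

lemma coupComp_eq_compProd (s t : Measure (X × X)) [IsFiniteMeasure s] [IsFiniteMeasure t] :
    coupComp t s = s.fst ⊗ₘ (t.condKernel ∘ₖ s.condKernel) := by
  ext E hE
  have hswap : s.snd ⊗ₘ (s.map Prod.swap).condKernel = s.map Prod.swap := by
    rw [← Measure.fst_map_swap, Measure.disintegrate]
  have htE : Measurable fun z : X × X => t.condKernel z.1 (Prod.mk z.2 ⁻¹' E) :=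
    (Kernel.measurable_kernel_snd_prodMk_fst _ hE).comp measurable_swap
  rw [coupComp, Measure.map_snd_compProd_prod_apply _ _ _ hE,
    Measure.compProd_comp_apply _ _ _ hE, Measure.disintegrate, hswap,
    lintegral_map htE measurable_swap]
  rfl

theorem condKernel_coupComp_general (p : Measure X)
    (s t : Measure (X × X)) [IsProbabilityMeasure s] [IsProbabilityMeasure t]
    (hs1 : s.fst = p) :
    ∀ᵐ x ∂p, ∀ C : Set X, MeasurableSet C →
      (coupComp t s).condKernel x C = ∫⁻ y, t.condKernel y C ∂(s.condKernel x) := by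
  have hfst : (coupComp t s).fst = p := by
    rw [coupComp_eq_compProd, Measure.fst_compProd, hs1]
  have hdisint : coupComp t s = (coupComp t s).fst ⊗ₘ (t.condKernel ∘ₖ s.condKernel) := by
    rw [hfst, ← hs1, coupComp_eq_compProd]
  filter_upwards [hfst ▸ eq_condKernel_of_measure_eq_compProd _ hdisint] with x hx C hC
  rw [← hx, Kernel.comp_apply' _ _ _ hC]

/-- Chapman–Kolmogorov: for `p`-almost every `x`, the conditional kernel of the composite
coupling `t ∘ s` is the composition of the conditionals of `s` and `t`:
`(t∘s)⃗(C|x) = ∫ t⃗(C|y) s⃗(dy|x)`. -/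
theorem condKernel_coupComp (p q r : Measure X)
    [IsProbabilityMeasure p] [IsProbabilityMeasure q] [IsProbabilityMeasure r]
    (s t : Measure (X × X)) [IsProbabilityMeasure s] [IsProbabilityMeasure t]
    (hs1 : s.fst = p) (hs2 : s.snd = q) (ht1 : t.fst = q) (ht2 : t.snd = r) :
    ∀ᵐ x ∂p, ∀ C : Set X, MeasurableSet C →
      (coupComp t s).condKernel x C = ∫⁻ y, t.condKernel y C ∂(s.condKernel x) :=
  condKernel_coupComp_general p s t hs1
end

section
/- Let X be a standard Borel space equipped with a measurable pq-metric c, let k ≥ 1 be an integer, let p, q, r be probability measures on X, let s be a coupling of p and q, and let t be a coupling of q and r. Then cost_k(t∘s) ≤ cost_k(s) + cost_k(t), where the inequality is between values in [0,∞]. -/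
/-! The composite `t ∘ s` is the outer marginal of the three-point measure
`μ = q ⊗ (s⃖ ×ₖ t⃗)` on `(y, (x, z))`, whose `(x, y)`-marginal is `s` and whose `(y, z)`-marginal
is `t`. Along `μ` the triangle inequality gives `c(x, z) ≤ c(x, y) + c(y, z)` pointwise, and
Minkowski's inequality in `L^k(μ)` turns this into the inequality between the `k`-costs. -/

open MeasureTheory ProbabilityTheory ENNReal

variable {X : Type*} [MeasurableSpace X] [StandardBorelSpace X] [Nonempty X]

/-- The `k`-cost of a measure `s` on `X × X`, relative to a cost function `c`:
`cost_k(s) = (∫ c(x,y)^k ds(x,y))^(1/k)`, computed in `[0,∞]`. -/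
noncomputable def cost (c : X × X → ℝ≥0∞) (k : ℕ) (s : Measure (X × X)) : ℝ≥0∞ :=
  (∫⁻ z, c z ^ k ∂s) ^ ((k : ℝ)⁻¹)

namespace MeasureTheory.Measure

variable {α β γ : Type*} [MeasurableSpace α] [MeasurableSpace β] [MeasurableSpace γ]

lemma map_compProd_prod_fst (μ : Measure α) [SFinite μ] (κ : Kernel α β)
    [IsSFiniteKernel κ] (η : Kernel α γ) [IsMarkovKernel η] :
    (μ ⊗ₘ (κ ×ₖ η)).map (Prod.map id Prod.fst) = μ ⊗ₘ κ := by
  rw [← compProd_map measurable_fst, ← Kernel.fst_eq, Kernel.fst_prod]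

lemma map_compProd_prod_snd (μ : Measure α) [SFinite μ] (κ : Kernel α β)
    [IsMarkovKernel κ] (η : Kernel α γ) [IsSFiniteKernel η] :
    (μ ⊗ₘ (κ ×ₖ η)).map (Prod.map id Prod.snd) = μ ⊗ₘ η := by
  rw [← compProd_map measurable_snd, ← Kernel.snd_eq, Kernel.snd_prod]

lemma map_compProd_condKernel_swap_prod_eq [StandardBorelSpace α] [Nonempty α]
    (s : Measure (α × β)) [IsFiniteMeasure s] (η : Kernel β γ) [IsMarkovKernel η] :
    (s.snd ⊗ₘ ((s.map Prod.swap).condKernel ×ₖ η)).map (fun w => (w.2.1, w.1)) = s := by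
  have h : (s.snd ⊗ₘ ((s.map Prod.swap).condKernel ×ₖ η)).map (Prod.map id Prod.fst) =
      s.map Prod.swap := by
    rw [map_compProd_prod_fst, ← fst_map_swap, disintegrate]
  calc _ = ((s.snd ⊗ₘ ((s.map Prod.swap).condKernel ×ₖ η)).map
        (Prod.map id Prod.fst)).map Prod.swap := by
        rw [map_map measurable_swap (by fun_prop)]; rfl
    _ = s := by
        rw [h, map_map measurable_swap measurable_swap, Prod.swap_swap_eq, map_id]

lemma map_compProd_prod_condKernel_eq [StandardBorelSpace γ] [Nonempty γ]
    (t : Measure (β × γ)) [IsFiniteMeasure t] (κ : Kernel β α) [IsMarkovKernel κ] :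
    (t.fst ⊗ₘ (κ ×ₖ t.condKernel)).map (Prod.map id Prod.snd) = t := by
  rw [map_compProd_prod_snd, disintegrate]

end MeasureTheory.Measure

section Cost

variable {Y Ω : Type*} [MeasurableSpace Y] [MeasurableSpace Ω] {c : Y × Y → ℝ≥0∞} {k : ℕ}

lemma cost_map (hc : Measurable c) (μ : Measure Ω) {F : Ω → Y × Y} (hF : Measurable F) :
    cost c k (μ.map F) = (∫⁻ w, c (F w) ^ k ∂μ) ^ ((k : ℝ)⁻¹) := by
  rw [cost, lintegral_map (by fun_prop) hF]

theorem cost_map_le_add (hc : Measurable c) (htri : ∀ x y z : Y, c (x, z) ≤ c (x, y) + c (y, z))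
    (hk : 1 ≤ k) (μ : Measure Ω) {f g h : Ω → Y} (hf : Measurable f) (hg : Measurable g)
    (hh : Measurable h) :
    cost c k (μ.map fun w => (f w, h w)) ≤
      cost c k (μ.map fun w => (f w, g w)) + cost c k (μ.map fun w => (g w, h w)) := by
  rw [cost_map hc μ (by fun_prop), cost_map hc μ (by fun_prop), cost_map hc μ (by fun_prop)]
  have hk' : (1 : ℝ) ≤ k := by exact_mod_cast hk
  calc (∫⁻ w, c (f w, h w) ^ k ∂μ) ^ ((k : ℝ)⁻¹)
      ≤ (∫⁻ w, (c (f w, g w) + c (g w, h w)) ^ k ∂μ) ^ ((k : ℝ)⁻¹) := by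
        gcongr with w
        exact htri _ _ _
    _ ≤ _ := by
        simpa only [one_div, Pi.add_apply, ← ENNReal.rpow_natCast] using
          ENNReal.lintegral_Lp_add_le (μ := μ) (p := k) (by fun_prop) (by fun_prop) hk'

end Cost

theorem cost_coupComp_le_general (c : X × X → ℝ≥0∞) (hc : Measurable c)
    (htri : ∀ x y z : X, c (x, z) ≤ c (x, y) + c (y, z))
    (k : ℕ) (hk : 1 ≤ k)
    (q : Measure X)
    (s t : Measure (X × X)) [IsProbabilityMeasure s] [IsProbabilityMeasure t]
    (hs2 : s.snd = q) (ht1 : t.fst = q) :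
    cost c k (coupComp t s) ≤ cost c k s + cost c k t := by
  set μ := s.snd ⊗ₘ ((s.map Prod.swap).condKernel ×ₖ t.condKernel)
  have hμs : μ.map (fun w => (w.2.1, w.1)) = s :=
    s.map_compProd_condKernel_swap_prod_eq t.condKernel
  have hμt : μ.map (Prod.map id Prod.snd) = t := by
    simp only [μ, hs2, ← ht1]
    exact t.map_compProd_prod_condKernel_eq _
  calc cost c k (coupComp t s) = cost c k (μ.map fun w => (w.2.1, w.2.2)) := rfl
    _ ≤ cost c k s + cost c k t := by
        rw [← hμs, ← hμt]
        exact cost_map_le_add hc htri hk μ (by fun_prop) (by fun_prop) (by fun_prop)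

/-- Triangle inequality for the `k`-cost of composite couplings: if `c` is a measurable
pq-metric on the standard Borel space `X`, then `cost_k(t ∘ s) ≤ cost_k(s) + cost_k(t)`. -/
theorem cost_coupComp_le (c : X × X → ℝ≥0∞) (hc : Measurable c)
    (hrefl : ∀ x : X, c (x, x) = 0)
    (htri : ∀ x y z : X, c (x, z) ≤ c (x, y) + c (y, z))
    (k : ℕ) (hk : 1 ≤ k)
    (p q r : Measure X)
    [IsProbabilityMeasure p] [IsProbabilityMeasure q] [IsProbabilityMeasure r]
    (s t : Measure (X × X)) [IsProbabilityMeasure s] [IsProbabilityMeasure t]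
    (hs1 : s.fst = p) (hs2 : s.snd = q) (ht1 : t.fst = q) (ht2 : t.snd = r) :
    cost c k (coupComp t s) ≤ cost c k s + cost c k t :=
  cost_coupComp_le_general c hc htri k hk q s t hs2 ht1
end

section
/- Let X be a standard Borel space, let p, q be probability measures on X, and let s be a coupling of p and q. Then composition with identity couplings is trivial: s ∘ I_p = s and I_q ∘ s = s, where I_p and I_q are the identity couplings of p and q. -/
open MeasureTheory ProbabilityTheory

variable {X : Type*} [MeasurableSpace X] [StandardBorelSpace X] [Nonempty X]

/-- The identity coupling of `p`: the pushforward of `p` along the diagonal `x ↦ (x, x)`. -/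
noncomputable def idCoup (p : Measure X) : Measure (X × X) :=
  p.map (fun x => (x, x))

instance idCoup.instIsProbabilityMeasure (p : Measure X) [IsProbabilityMeasure p] :
    IsProbabilityMeasure (idCoup p) :=
  MeasureTheory.Measure.isProbabilityMeasure_map (measurable_id.prodMk measurable_id).aemeasurable

/-!
The identity coupling `I_p` is `p ⊗ₘ Kernel.id`, so by uniqueness of disintegrations both of its
conditional kernels are the identity kernel `p`-almost everywhere. Substituting them into the
composite, the identity factor of the product kernel `s⃖ ×ₖ t⃗` only copies the middle coordinate,
and what is left is the disintegration of `s` (for `s ∘ I_p`) or of its swap (for `I_q ∘ s`).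
-/

namespace MeasureTheory.Measure

variable {α β : Type*} {mα : MeasurableSpace α} {mβ : MeasurableSpace β}
  (μ : Measure α) [SFinite μ]

lemma snd_compProd_id_prod (η : Kernel α β) [IsSFiniteKernel η] :
    (μ ⊗ₘ (Kernel.id ×ₖ η)).snd = μ ⊗ₘ η := by
  rw [snd_compProd, compProd_eq_comp_prod]

lemma snd_compProd_prod_id (κ : Kernel α β) [IsSFiniteKernel κ] :
    (μ ⊗ₘ (κ ×ₖ Kernel.id)).snd = (μ ⊗ₘ κ).map Prod.swap := by
  rw [snd_compProd, ← Kernel.swap_prod, ← comp_assoc, ← compProd_eq_comp_prod, Kernel.swap,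
    deterministic_comp_eq_map]

end MeasureTheory.Measure

lemma ProbabilityTheory.Kernel.prod_congr_ae {α β γ : Type*} {mα : MeasurableSpace α}
    {mβ : MeasurableSpace β} {mγ : MeasurableSpace γ} {μ : Measure α}
    {κ κ' : Kernel α β} {η η' : Kernel α γ} [IsSFiniteKernel κ] [IsSFiniteKernel κ']
    [IsSFiniteKernel η] [IsSFiniteKernel η'] (hκ : κ =ᵐ[μ] κ') (hη : η =ᵐ[μ] η') :
    κ ×ₖ η =ᵐ[μ] κ' ×ₖ η' := by
  filter_upwards [hκ, hη] with a hκa hηa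
  rw [Kernel.prod_apply, Kernel.prod_apply, hκa, hηa]

section IdCoup

variable {α : Type*} [MeasurableSpace α] (p : Measure α)

lemma idCoup_eq_compProd_id [SFinite p] : idCoup p = p ⊗ₘ Kernel.id :=
  Measure.compProd_id.symm

lemma fst_idCoup [SFinite p] : (idCoup p).fst = p := by
  rw [idCoup_eq_compProd_id, Measure.fst_compProd]

lemma snd_idCoup [SFinite p] : (idCoup p).snd = p := by
  rw [idCoup_eq_compProd_id, Measure.snd_compProd, Measure.id_comp]

lemma map_swap_idCoup : (idCoup p).map Prod.swap = idCoup p := by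
  rw [idCoup, Measure.map_map measurable_swap (by fun_prop)]
  rfl

end IdCoup

-- Stated for any `ρ = idCoup p` so that it applies whatever `IsFiniteMeasure ρ` instance is in use.
lemma condKernel_ae_eq_id_of_eq_idCoup {ρ : Measure (X × X)} [IsFiniteMeasure ρ]
    {p : Measure X} [SFinite p] (hρ : ρ = idCoup p) :
    ρ.condKernel =ᵐ[p] Kernel.id := by
  have hfst : ρ.fst = p := by rw [hρ, fst_idCoup]
  have h := eq_condKernel_of_measure_eq_compProd Kernel.id
    (by rw [hfst, hρ, idCoup_eq_compProd_id] : ρ = ρ.fst ⊗ₘ Kernel.id)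
  rw [hfst] at h
  exact Filter.EventuallyEq.symm h

lemma coupComp_eq_of_ae_eq {t s : Measure (X × X)} [IsFiniteMeasure s] [IsFiniteMeasure t]
    {κ η : Kernel X X} [IsSFiniteKernel κ] [IsSFiniteKernel η]
    (hκ : (s.map Prod.swap).condKernel =ᵐ[s.snd] κ) (hη : t.condKernel =ᵐ[s.snd] η) :
    coupComp t s = (s.snd ⊗ₘ (κ ×ₖ η)).snd := by
  rw [coupComp, Measure.compProd_congr (Kernel.prod_congr_ae hκ hη)]
  rfl

/-- Identity couplings are identities for composition: `s ∘ I_p = s` and `I_q ∘ s = s`. -/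
theorem coupComp_idCoup (p q : Measure X)
    [IsProbabilityMeasure p] [IsProbabilityMeasure q]
    (s : Measure (X × X)) [IsProbabilityMeasure s]
    (hs1 : s.fst = p) (hs2 : s.snd = q) :
    coupComp s (idCoup p) = s ∧ coupComp (idCoup q) s = s := by
  constructor
  · have hκ : ((idCoup p).map Prod.swap).condKernel =ᵐ[(idCoup p).snd] Kernel.id := by
      rw [snd_idCoup]
      exact condKernel_ae_eq_id_of_eq_idCoup (map_swap_idCoup p)
    rw [coupComp_eq_of_ae_eq hκ .rfl, Measure.snd_compProd_id_prod, snd_idCoup, ← hs1,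
      Measure.disintegrate]
  · have hη : (idCoup q).condKernel =ᵐ[s.snd] Kernel.id := by
      rw [hs2]
      exact condKernel_ae_eq_id_of_eq_idCoup rfl
    rw [coupComp_eq_of_ae_eq .rfl hη, Measure.snd_compProd_prod_id, ← Measure.fst_map_swap,
      Measure.disintegrate, Measure.map_map measurable_swap measurable_swap, Prod.swap_swap_eq,
      Measure.map_id]
end

section
/- Let X and Y be standard Borel spaces and let i : X → Y be a measurable embedding. Then for all probability measures p, q on X, the map r ↦ (i × i)♯ r is a bijection from the set of couplings of (p,q) onto the set of couplings of (i♯p, i♯q); that is, it is injective, and every coupling s of i♯p and i♯q equals (i × i)♯ r for a (unique) coupling r of p and q. -/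
open MeasureTheory ProbabilityTheory

section

open Set

variable {α β γ δ : Type*} [MeasurableSpace α] [MeasurableSpace β] [MeasurableSpace γ]
  [MeasurableSpace δ]

namespace MeasureTheory.Measure

lemma fst_map_prodMap {f : α → β} {g : γ → δ} (hf : Measurable f) (hg : Measurable g)
    (μ : Measure (α × γ)) : (μ.map (Prod.map f g)).fst = μ.fst.map f := by
  rw [Measure.fst, Measure.fst, map_map measurable_fst (hf.prodMap hg), map_map hf measurable_fst]
  rfl

lemma snd_map_prodMap {f : α → β} {g : γ → δ} (hf : Measurable f) (hg : Measurable g)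
    (μ : Measure (α × γ)) : (μ.map (Prod.map f g)).snd = μ.snd.map g := by
  rw [Measure.snd, Measure.snd, map_map measurable_snd (hf.prodMap hg), map_map hg measurable_snd]
  rfl

lemma ae_mem_prod_of_ae_fst_of_ae_snd {μ : Measure (α × β)} {s : Set α} {t : Set β}
    (hs : ∀ᵐ x ∂μ.fst, x ∈ s) (ht : ∀ᵐ y ∂μ.snd, y ∈ t) : ∀ᵐ z ∂μ, z ∈ s ×ˢ t := by
  filter_upwards [ae_of_ae_map measurable_fst.aemeasurable hs,
    ae_of_ae_map measurable_snd.aemeasurable ht] with z hz₁ hz₂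
  exact ⟨hz₁, hz₂⟩

end MeasureTheory.Measure

namespace MeasurableEmbedding

lemma map_comap_of_ae_mem_range {f : α → β} (hf : MeasurableEmbedding f) {μ : Measure β}
    (h : ∀ᵐ y ∂μ, y ∈ range f) : (μ.comap f).map f = μ := by
  rw [hf.map_comap, Measure.restrict_eq_self_of_ae_mem h]

lemma ae_mem_range_prodMap {i : α → β} {j : γ → δ} (hi : MeasurableEmbedding i)
    (hj : MeasurableEmbedding j) {s : Measure (β × δ)} {p : Measure α} {q : Measure γ}
    (hp : s.fst = p.map i) (hq : s.snd = q.map j) : ∀ᵐ z ∂s, z ∈ range (Prod.map i j) := by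
  rw [range_prodMap]
  exact Measure.ae_mem_prod_of_ae_fst_of_ae_snd
    (hp ▸ ae_map_mem_range i hi.measurableSet_range p)
    (hq ▸ ae_map_mem_range j hj.measurableSet_range q)

lemma exists_map_prodMap_eq {i : α → β} {j : γ → δ} (hi : MeasurableEmbedding i)
    (hj : MeasurableEmbedding j) {s : Measure (β × δ)} {p : Measure α} {q : Measure γ}
    (hp : s.fst = p.map i) (hq : s.snd = q.map j) :
    ∃ r : Measure (α × γ), r.fst = p ∧ r.snd = q ∧ r.map (Prod.map i j) = s := by
  set r := s.comap (Prod.map i j)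
  have hr : r.map (Prod.map i j) = s :=
    (hi.prodMap hj).map_comap_of_ae_mem_range (ae_mem_range_prodMap hi hj hp hq)
  refine ⟨r, hi.map_injective ?_, hj.map_injective ?_, hr⟩
  · rw [← Measure.fst_map_prodMap hi.measurable hj.measurable, hr, hp]
  · rw [← Measure.snd_map_prodMap hi.measurable hj.measurable, hr, hq]

end MeasurableEmbedding

end

variable {X Y : Type*} [MeasurableSpace X] [StandardBorelSpace X] [Nonempty X]
  [MeasurableSpace Y] [StandardBorelSpace Y] [Nonempty Y]

theorem map_prodMap_coupling_bijective_general (i : X → Y) (hi : MeasurableEmbedding i)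
    (p q : Measure X) :
    (∀ r r' : Measure (X × X), IsProbabilityMeasure r → IsProbabilityMeasure r' →
      r.fst = p → r.snd = q → r'.fst = p → r'.snd = q →
      r.map (Prod.map i i) = r'.map (Prod.map i i) → r = r') ∧
    (∀ s : Measure (Y × Y), IsProbabilityMeasure s →
      s.fst = p.map i → s.snd = q.map i →
      ∃ r : Measure (X × X), IsProbabilityMeasure r ∧ r.fst = p ∧ r.snd = q ∧
        r.map (Prod.map i i) = s) := by
  refine ⟨fun r r' _ _ _ _ _ _ h ↦ (hi.prodMap hi).map_injective h, fun s hs hp hq ↦ ?_⟩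
  obtain ⟨r, hrp, hrq, hrs⟩ := hi.exists_map_prodMap_eq hi hp hq
  subst hrs
  exact ⟨r, Measure.isProbabilityMeasure_of_map (Prod.map i i), hrp, hrq, rfl⟩

/-- For a measurable embedding `i : X → Y`, the map `r ↦ (i × i)♯ r` is a bijection from the
couplings of `(p, q)` onto the couplings of `(i♯p, i♯q)`: it is injective, and every coupling
of `i♯p` and `i♯q` is the image of a coupling of `p` and `q`. -/
theorem map_prodMap_coupling_bijective (i : X → Y) (hi : MeasurableEmbedding i)
    (p q : Measure X) [IsProbabilityMeasure p] [IsProbabilityMeasure q] :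
    (∀ r r' : Measure (X × X), IsProbabilityMeasure r → IsProbabilityMeasure r' →
      r.fst = p → r.snd = q → r'.fst = p → r'.snd = q →
      r.map (Prod.map i i) = r'.map (Prod.map i i) → r = r') ∧
    (∀ s : Measure (Y × Y), IsProbabilityMeasure s →
      s.fst = p.map i → s.snd = q.map i →
      ∃ r : Measure (X × X), IsProbabilityMeasure r ∧ r.fst = p ∧ r.snd = q ∧
        r.map (Prod.map i i) = s) :=
  map_prodMap_coupling_bijective_general i hi p q
end

section
/- Let (f, φ) be a measurable lens between standard Borel spaces X and Y, let p be a probability measure on X, and let s be a probability measure on Y × Y whose first marginal equals f♯p. Then the lifted coupling L(p,s) is a lifting of s at p: the first marginal of L(p,s) equals p, and the pushforward of L(p,s) along (x,x') ↦ (f(x), f(x')) equals s. -/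
/-! Because `f (φ (x, y)) = y`, pushing the kernel `x ↦ φ(x, ·)♯ s⃗(·|f x)` forward along `f`
gives back `s⃗(·|f x)`. Pushing `L(p,s) = p ⊗ K` forward along `f × f` therefore yields
`f♯p ⊗ s⃗ = s.fst ⊗ s⃗`, which is `s` by disintegration; the first marginal is `p` since `K` is
Markov. -/

open MeasureTheory ProbabilityTheory

variable {X Y : Type*} [MeasurableSpace X] [StandardBorelSpace X] [Nonempty X]
  [MeasurableSpace Y] [StandardBorelSpace Y] [Nonempty Y]

/-- The lifted coupling `L(p,s)` associated to a (measurable) lens `(f, φ)`: the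
composition-product of `p` with the Markov kernel sending `x` to the pushforward of
`s⃗(·| f x)` along `y ↦ φ(x, y)`, so that
`L(p,s)(A × A') = ∫_A ∫_Y 1_{A'}(φ(x,y)) s⃗(dy | f x) dp(x)`. -/
noncomputable def liftCoup {f : X → Y} (hf : Measurable f) {φ : X × Y → X}
    (_hφ : Measurable φ) (p : Measure X) [SFinite p]
    (s : Measure (Y × Y)) [IsFiniteMeasure s] : Measure (X × X) :=
  p.compProd ((Kernel.deterministic (id : X → X) measurable_id ×ₖ
    s.condKernel.comap f hf).map φ)


namespace MeasureTheory.Measure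

variable {α β γ δ : Type*} [MeasurableSpace α] [MeasurableSpace β] [MeasurableSpace γ]
  [MeasurableSpace δ]

lemma map_prodMap_compProd_comap (μ : Measure α) [SFinite μ] {f : α → γ} (hf : Measurable f)
    (η : Kernel γ δ) [IsSFiniteKernel η] :
    (μ ⊗ₘ η.comap f hf).map (Prod.map f id) = μ.map f ⊗ₘ η := by
  ext t ht
  rw [map_apply (hf.prodMap measurable_id) ht, compProd_apply (hf.prodMap measurable_id ht),
    compProd_apply ht, lintegral_map (Kernel.measurable_kernel_prodMk_left ht) hf]
  rfl

lemma map_prodMap_compProd (μ : Measure α) [SFinite μ] (κ : Kernel α β) [IsSFiniteKernel κ]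
    {f : α → γ} (hf : Measurable f) {g : β → δ} (hg : Measurable g)
    (η : Kernel γ δ) [IsSFiniteKernel η] (hκ : κ.map g = η.comap f hf) :
    (μ ⊗ₘ κ).map (Prod.map f g) = μ.map f ⊗ₘ η := by
  have hfg : Prod.map f g = Prod.map f id ∘ Prod.map id g := rfl
  rw [hfg, ← map_map (hf.prodMap measurable_id) (measurable_id.prodMap hg), ← compProd_map hg,
    hκ, map_prodMap_compProd_comap]

end MeasureTheory.Measure

namespace ProbabilityTheory.Kernel

variable {α β : Type*} [MeasurableSpace α] [MeasurableSpace β]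

lemma map_map_deterministic_id_prod {f : α → β} (hf : Measurable f) {φ : α × β → α}
    (hφ : Measurable φ) (hfφ : ∀ a b, f (φ (a, b)) = b) (η : Kernel α β) [IsSFiniteKernel η] :
    ((deterministic id measurable_id ×ₖ η).map φ).map f = η := by
  have hfφ' : f ∘ φ = Prod.snd := funext fun ab ↦ hfφ ab.1 ab.2
  rw [← map_comp_right _ hφ hf, hfφ', ← snd_eq, snd_prod]

end ProbabilityTheory.Kernel

theorem liftCoup_isLifting_general (f : X → Y) (hf : Measurable f)
    (φ : X × Y → X) (hφ : Measurable φ)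
    (hlens1 : ∀ (x : X) (y : Y), f (φ (x, y)) = y)
    (p : Measure X) [IsProbabilityMeasure p]
    (s : Measure (Y × Y)) [IsProbabilityMeasure s] (hs : s.fst = p.map f) :
    (liftCoup hf hφ p s).fst = p ∧ (liftCoup hf hφ p s).map (Prod.map f f) = s := by
  have := Kernel.IsMarkovKernel.map
    (Kernel.deterministic id measurable_id ×ₖ s.condKernel.comap f hf) hφ
  refine ⟨Measure.fst_compProd _ _, ?_⟩
  rw [liftCoup, Measure.map_prodMap_compProd _ _ hf hf s.condKernel
    (Kernel.map_map_deterministic_id_prod hf hφ hlens1 _), ← hs, Measure.disintegrate]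

/-- For a measurable lens `(f, φ)` between standard Borel spaces, and `s` a probability
measure on `Y × Y` whose first marginal is `f♯p`, the lifted coupling `L(p,s)` is a lifting
of `s` at `p`: its first marginal is `p` and its pushforward along `f × f` is `s`. -/
theorem liftCoup_isLifting (f : X → Y) (hf : Measurable f)
    (φ : X × Y → X) (hφ : Measurable φ)
    (hlens1 : ∀ (x : X) (y : Y), f (φ (x, y)) = y)
    (hlens2 : ∀ x : X, φ (x, f x) = x)
    (hlens3 : ∀ (x : X) (y y' : Y), φ (φ (x, y), y') = φ (x, y'))
    (p : Measure X) [IsProbabilityMeasure p]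
    (s : Measure (Y × Y)) [IsProbabilityMeasure s] (hs : s.fst = p.map f) :
    (liftCoup hf hφ p s).fst = p ∧ (liftCoup hf hφ p s).map (Prod.map f f) = s :=
  liftCoup_isLifting_general f hf φ hφ hlens1 p s hs
end

section
/- Let (f, φ) be a measurable lens between standard Borel spaces X and Y and let p be a probability measure on X. Then the lifting of the identity coupling of f♯p is the identity coupling of p: L(p, I_{f♯p}) = I_p, where I_μ denotes the pushforward of μ along the diagonal map x ↦ (x,x). -/
open MeasureTheory ProbabilityTheory

variable {X Y : Type*} [MeasurableSpace X] [StandardBorelSpace X] [Nonempty X]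
  [MeasurableSpace Y] [StandardBorelSpace Y] [Nonempty Y]

/-- Composition with the identity deterministic kernel is the diagonal pushforward. -/
lemma compProd_deterministic_id_aux {Z : Type*} [MeasurableSpace Z]
    (μ : Measure Z) [SFinite μ] :
    μ ⊗ₘ Kernel.deterministic (id : Z → Z) measurable_id = μ.map (fun z => (z, z)) := by
  have hdiag : Measurable (fun z : Z => (z, z)) := by fun_prop
  ext s hs
  rw [Measure.compProd_apply hs, Measure.map_apply hdiag hs]
  have h : ∀ z : Z,
      ((Kernel.deterministic (id : Z → Z) measurable_id : Kernel Z Z) z) (Prod.mk z ⁻¹' s)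
        = ((fun z : Z => (z, z)) ⁻¹' s).indicator 1 z := by
    intro z
    rw [Kernel.deterministic_apply measurable_id,
      Measure.dirac_apply' _ (measurable_prodMk_left hs)]
    rfl
  rw [lintegral_congr h, lintegral_indicator_one (hdiag hs)]

/-- For a measurable lens `(f, φ)` between standard Borel spaces, the lifting of the identity
coupling of `f♯p` is the identity coupling of `p`: `L(p, I_{f♯p}) = I_p`. -/
theorem liftCoup_idCoup (f : X → Y) (hf : Measurable f)
    (φ : X × Y → X) (hφ : Measurable φ)
    (hlens1 : ∀ (x : X) (y : Y), f (φ (x, y)) = y)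
    (hlens2 : ∀ x : X, φ (x, f x) = x)
    (hlens3 : ∀ (x : X) (y y' : Y), φ (φ (x, y), y') = φ (x, y'))
    (p : Measure X) [IsProbabilityMeasure p] :
    liftCoup hf hφ p ((p.map f).map (fun y => (y, y))) = p.map (fun x => (x, x)) := by
  have hpf : IsProbabilityMeasure (p.map f) := Measure.isProbabilityMeasure_map hf.aemeasurable
  have hdiag : Measurable (fun y : Y => (y, y)) := by fun_prop
  have hμprob : IsProbabilityMeasure ((p.map f).map (fun y => (y, y))) :=
    Measure.isProbabilityMeasure_map hdiag.aemeasurable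
  have hfst : ((p.map f).map (fun y => (y, y))).fst = p.map f := by
    rw [Measure.fst, Measure.map_map measurable_fst hdiag]
    exact Measure.map_id
  have hdecomp : (p.map f).map (fun y => (y, y))
      = ((p.map f).map (fun y => (y, y))).fst ⊗ₘ
        Kernel.deterministic (id : Y → Y) measurable_id := by
    rw [hfst, compProd_deterministic_id_aux]
  have hcond : ∀ᵐ y ∂(p.map f),
      Kernel.deterministic (id : Y → Y) measurable_id y
        = ((p.map f).map (fun y => (y, y))).condKernel y := by
    have h := eq_condKernel_of_measure_eq_compProd _ hdecomp
    rwa [hfst] at h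
  have hcond' : ∀ᵐ x ∂p,
      ((p.map f).map (fun y => (y, y))).condKernel (f x) = Measure.dirac (f x) := by
    filter_upwards [ae_of_ae_map hf.aemeasurable hcond] with x hx
    rw [← hx, Kernel.deterministic_apply measurable_id, id]
  have hker : ∀ᵐ x ∂p,
      ((Kernel.deterministic (id : X → X) measurable_id ×ₖ
        ((p.map f).map (fun y => (y, y))).condKernel.comap f hf).map φ) x
        = Kernel.deterministic (id : X → X) measurable_id x := by
    filter_upwards [hcond'] with x hx
    rw [Kernel.map_apply _ hφ, Kernel.prod_apply, Kernel.comap_apply,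
      Kernel.deterministic_apply measurable_id,
      hx, Measure.dirac_prod_dirac, Measure.map_dirac' hφ]
    simp [hlens2]
  exact (Measure.compProd_congr hker).trans (compProd_deterministic_id_aux p)
end
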